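/- arXiv:1609.07758 — 3 statements merged into one kernel-verified Lean document; each statement's English description precedes it below -/
import Mathlib

section
/- Every eigenvalue λ of the generalized eigenvalue problem Ãe = λ C̃e is positive, and every generalized eigenvalue has geometric multiplicity at most two. -/
/-! For `e : Fin (n - 1) → ℝ` let `u = ∑ eᵢ φᵢ₊₁` be the polynomial of degree `≤ n` with nodal
values `e` at the interior nodes and `0` at `±1`. Then `eᵀC̃e = ∫ u²` and `eᵀÃe = ∫ u'²`, so both
matrices are positive definite, which gives positivity of the eigenvalues.

If `Ãe = λC̃e`, integrating by parts against the interior basis functions `φⱼ` (which vanish at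
`±1`) shows that `u'' + λu` is `L²`-orthogonal to all of them. These `n - 1` linear conditions on
polynomials of degree `≤ n` are independent, since composing them with `e ↦ u` gives `C̃`, so they
cut out a space of dimension `2`. Finally `e ↦ u'' + λu` is injective: a polynomial solution of
`u'' + λu = 0` is zero by comparing degrees when `λ ≠ 0`, and affine when `λ = 0`, and it vanishes
at `±1`. -/

open MeasureTheory

/-- Equispaced nodes `-1 + 2k/n` in `[-1,1]`. -/
noncomputable def femNode (n : ℕ) (k : Fin (n + 1)) : ℝ := -1 + 2 * (k : ℝ) / (n : ℝ)

/-- Lagrange basis polynomial of degree `n` at the equispaced nodes. -/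
noncomputable def lagrangeBasis (n : ℕ) (l : Fin (n + 1)) (x : ℝ) : ℝ :=
  ∏ k ∈ Finset.univ.erase l, (x - femNode n k) / (femNode n l - femNode n k)

/-- Local stiffness matrix `A_{kl} = ∫_{-1}^{1} e_k' e_l'`. -/
noncomputable def stiffMatrix (n : ℕ) : Matrix (Fin (n + 1)) (Fin (n + 1)) ℝ :=
  fun k l => ∫ x in (-1 : ℝ)..1, deriv (lagrangeBasis n k) x * deriv (lagrangeBasis n l) x

/-- Local mass matrix `C_{kl} = ∫_{-1}^{1} e_k e_l`. -/
noncomputable def massMatrix (n : ℕ) : Matrix (Fin (n + 1)) (Fin (n + 1)) ℝ :=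
  fun k l => ∫ x in (-1 : ℝ)..1, lagrangeBasis n k x * lagrangeBasis n l x

/-- Embedding of the interior indices `1,…,n-1` into `0,…,n`. -/
def interiorEmb (n : ℕ) : Fin (n - 1) → Fin (n + 1) := fun i => ⟨(i : ℕ) + 1, by omega⟩

/-- Interior stiffness submatrix `Ã`. -/
noncomputable def Atil (n : ℕ) : Matrix (Fin (n - 1)) (Fin (n - 1)) ℝ :=
  (stiffMatrix n).submatrix (interiorEmb n) (interiorEmb n)

/-- Interior mass submatrix `C̃`. -/
noncomputable def Ctil (n : ℕ) : Matrix (Fin (n - 1)) (Fin (n - 1)) ℝ :=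
  (massMatrix n).submatrix (interiorEmb n) (interiorEmb n)

open Polynomial Module Matrix LinearMap

noncomputable def polyIntegral (a b : ℝ) : ℝ[X] →ₗ[ℝ] ℝ where
  toFun p := ∫ x in a..b, p.eval x
  map_add' p q := by
    simp only [eval_add]
    exact intervalIntegral.integral_add (p.continuous.intervalIntegrable _ _)
      (q.continuous.intervalIntegrable _ _)
  map_smul' c p := by simp [intervalIntegral.integral_const_mul]

section PolyIntegral

variable {a b : ℝ}

lemma polyIntegral_apply (p : ℝ[X]) : polyIntegral a b p = ∫ x in a..b, p.eval x := rfl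

lemma polyIntegral_mul_self_pos (hab : a < b) {p : ℝ[X]} (hp : p ≠ 0) :
    0 < polyIntegral a b (p * p) := by
  obtain ⟨c, hc, hpc⟩ := ((Set.Icc_infinite hab).sdiff (p.finite_setOfPred_isRoot hp)).nonempty
  refine intervalIntegral.integral_pos hab (p * p).continuous.continuousOn
    (fun x _ => by simpa using mul_self_nonneg (p.eval x)) ⟨c, hc, ?_⟩
  simpa using mul_self_pos.mpr hpc

lemma polyIntegral_derivative (p : ℝ[X]) :
    polyIntegral a b (derivative p) = p.eval b - p.eval a :=
  intervalIntegral.integral_deriv_eq_sub' _ (funext fun _ => p.deriv)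
    (fun _ _ => p.differentiableAt) p.derivative.continuous.continuousOn

lemma polyIntegral_mul_derivative {v : ℝ[X]} (hva : v.eval a = 0) (hvb : v.eval b = 0)
    (w : ℝ[X]) : polyIntegral a b (v * derivative w) = -polyIntegral a b (derivative v * w) := by
  have := polyIntegral_derivative (a := a) (b := b) (v * w)
  rw [derivative_mul, map_add, eval_mul, eval_mul, hva, hvb] at this
  linarith

end PolyIntegral

theorem Polynomial.eq_zero_of_derivative_derivative_add_smul_eq_zero {K : Type*} [Field K]
    [CharZero K] {lam a b : K} {u : K[X]} (hab : a ≠ b)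
    (h : derivative (derivative u) + lam • u = 0) (ha : u.eval a = 0) (hb : u.eval b = 0) :
    u = 0 := by
  classical
  rcases eq_or_ne lam 0 with rfl | hlam
  · rw [zero_smul, add_zero, derivative_eq_zero, natDegree_derivative] at h
    refine eq_zero_of_natDegree_lt_card_of_eval_eq_zero' u {a, b} ?_ ?_
    · simp [ha, hb]
    · rw [Finset.card_pair hab]; omega
  · by_contra hu
    have hlt : (derivative (derivative u)).degree < u.degree :=
      degree_derivative_le.trans_lt (degree_derivative_lt hu)
    rw [eq_neg_of_add_eq_zero_left h, degree_neg, smul_eq_C_mul, degree_C_mul hlam] at hlt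
    exact hlt.false

lemma pos_of_mulVec_eq_smul_mulVec {ι : Type*} [Fintype ι] {A C : Matrix ι ι ℝ}
    (hA : A.PosDef) (hC : C.PosDef) {lam : ℝ} {e : ι → ℝ} (he : e ≠ 0)
    (h : A *ᵥ e = lam • C *ᵥ e) : 0 < lam := by
  have hAe := hA.dotProduct_mulVec_pos he
  rw [h, dotProduct_smul, smul_eq_mul] at hAe
  exact pos_of_mul_pos_left hAe (hC.dotProduct_mulVec_pos he).le

noncomputable def femPoly (n : ℕ) (l : Fin (n + 1)) : ℝ[X] :=
  Lagrange.basis Finset.univ (femNode n) l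

lemma lagrangeBasis_eq_eval_femPoly (n : ℕ) (l : Fin (n + 1)) :
    lagrangeBasis n l = fun x => (femPoly n l).eval x := by
  funext x
  simp only [lagrangeBasis, femPoly, Lagrange.basis, Lagrange.basisDivisor, eval_prod,
    eval_mul, eval_C, eval_sub, eval_X, div_eq_inv_mul]

lemma femNode_injective (n : ℕ) : Function.Injective (femNode n) := by
  rcases eq_or_ne n 0 with rfl | hn
  · exact fun k l _ => Fin.ext (by omega)
  intro k l hkl
  have hn' : (n : ℝ) ≠ 0 := Nat.cast_ne_zero.mpr hn
  have hkl' : (k : ℝ) = l := by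
    unfold femNode at hkl
    field_simp at hkl
    linarith
  exact Fin.ext (Nat.cast_injective hkl')

lemma femNode_zero (n : ℕ) : femNode n 0 = -1 := by simp [femNode]

lemma femNode_last {n : ℕ} (hn : n ≠ 0) : femNode n (Fin.last n) = 1 := by
  norm_num [femNode, mul_div_assoc, div_self (Nat.cast_ne_zero.mpr hn : (n : ℝ) ≠ 0)]

lemma femPoly_mem_degreeLT (n : ℕ) (l : Fin (n + 1)) : femPoly n l ∈ degreeLT ℝ (n + 1) := by
  rw [mem_degreeLT, femPoly,
    Lagrange.degree_basis (femNode_injective n).injOn (Finset.mem_univ l)]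
  simp only [Finset.card_univ, Fintype.card_fin, add_tsub_cancel_right]
  exact_mod_cast n.lt_succ_self

lemma massMatrix_eq_polyIntegral (n : ℕ) (k l : Fin (n + 1)) :
    massMatrix n k l = polyIntegral (-1) 1 (femPoly n k * femPoly n l) := by
  simp [massMatrix, polyIntegral_apply, lagrangeBasis_eq_eval_femPoly]

lemma stiffMatrix_eq_polyIntegral (n : ℕ) (k l : Fin (n + 1)) :
    stiffMatrix n k l
      = polyIntegral (-1) 1 (derivative (femPoly n k) * derivative (femPoly n l)) := by
  simp [stiffMatrix, polyIntegral_apply, lagrangeBasis_eq_eval_femPoly, Polynomial.deriv]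

noncomputable def interiorBasis (n : ℕ) (i : Fin (n - 1)) : ℝ[X] := femPoly n (interiorEmb n i)

noncomputable def interiorPoly (n : ℕ) : (Fin (n - 1) → ℝ) →ₗ[ℝ] degreeLT ℝ (n + 1) :=
  Fintype.linearCombination ℝ fun i => ⟨interiorBasis n i, femPoly_mem_degreeLT n _⟩

noncomputable def interiorMoments (n : ℕ) : degreeLT ℝ (n + 1) →ₗ[ℝ] (Fin (n - 1) → ℝ) :=
  LinearMap.pi fun j => polyIntegral (-1) 1 ∘ₗ LinearMap.mulLeft ℝ (interiorBasis n j) ∘ₗ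
    (degreeLT ℝ (n + 1)).subtype

noncomputable def helmholtz (n : ℕ) (lam : ℝ) : degreeLT ℝ (n + 1) →ₗ[ℝ] degreeLT ℝ (n + 1) :=
  (derivative ∘ₗ derivative + lam • LinearMap.id).restrict fun p hp => by
    refine add_mem ?_ (Submodule.smul_mem _ _ hp)
    rw [mem_degreeLT] at hp ⊢
    exact (degree_derivative_le.trans degree_derivative_le).trans_lt hp

section Interior

variable {n : ℕ}

lemma interiorBasis_eval_neg_one (i : Fin (n - 1)) : (interiorBasis n i).eval (-1) = 0 := by
  rw [← femNode_zero n, interiorBasis, femPoly]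
  exact Lagrange.eval_basis_of_ne (by simp [interiorEmb, Fin.ext_iff]) (Finset.mem_univ _)

lemma interiorBasis_eval_one (i : Fin (n - 1)) : (interiorBasis n i).eval 1 = 0 := by
  have hi := i.isLt
  rw [← femNode_last (n := n) (by omega), interiorBasis, femPoly]
  exact Lagrange.eval_basis_of_ne (by simp [interiorEmb, Fin.ext_iff]; omega) (Finset.mem_univ _)

lemma interiorBasis_eval_femNode (i j : Fin (n - 1)) :
    (interiorBasis n i).eval (femNode n (interiorEmb n j)) = if i = j then 1 else 0 := by
  rw [interiorBasis, femPoly]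
  split_ifs with hij
  · rw [hij, Lagrange.eval_basis_self (femNode_injective n).injOn (Finset.mem_univ _)]
  · refine Lagrange.eval_basis_of_ne ?_ (Finset.mem_univ _)
    simpa [interiorEmb, Fin.ext_iff] using hij

lemma coe_interiorPoly (e : Fin (n - 1) → ℝ) :
    (interiorPoly n e : ℝ[X]) = ∑ i, e i • interiorBasis n i := by
  simp [interiorPoly, Fintype.linearCombination_apply]

lemma interiorPoly_eval_neg_one (e : Fin (n - 1) → ℝ) :
    (interiorPoly n e : ℝ[X]).eval (-1) = 0 := by
  simp [coe_interiorPoly, eval_finsetSum, interiorBasis_eval_neg_one]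

lemma interiorPoly_eval_one (e : Fin (n - 1) → ℝ) : (interiorPoly n e : ℝ[X]).eval 1 = 0 := by
  simp [coe_interiorPoly, eval_finsetSum, interiorBasis_eval_one]

lemma interiorPoly_eval_femNode (e : Fin (n - 1) → ℝ) (j : Fin (n - 1)) :
    (interiorPoly n e : ℝ[X]).eval (femNode n (interiorEmb n j)) = e j := by
  simp [coe_interiorPoly, eval_finsetSum, interiorBasis_eval_femNode]

lemma interiorPoly_injective : Function.Injective (interiorPoly n) := by
  refine (injective_iff_map_eq_zero _).mpr fun e he => funext fun j => ?_
  simpa [he] using (interiorPoly_eval_femNode e j).symm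

lemma polyIntegral_interiorBasis_mul_interiorPoly (f : ℝ[X] →ₗ[ℝ] ℝ[X]) (e : Fin (n - 1) → ℝ)
    (j : Fin (n - 1)) :
    polyIntegral (-1) 1 (f (interiorBasis n j) * f (interiorPoly n e))
      = ∑ i, polyIntegral (-1) 1 (f (interiorBasis n j) * f (interiorBasis n i)) * e i := by
  simp [coe_interiorPoly, Finset.mul_sum, mul_comm]

lemma Ctil_mulVec_apply (e : Fin (n - 1) → ℝ) (j : Fin (n - 1)) :
    (Ctil n *ᵥ e) j = polyIntegral (-1) 1 (interiorBasis n j * interiorPoly n e) := by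
  simpa [Matrix.mulVec, dotProduct, Ctil, massMatrix_eq_polyIntegral, interiorBasis]
    using (polyIntegral_interiorBasis_mul_interiorPoly LinearMap.id e j).symm

lemma Atil_mulVec_apply (e : Fin (n - 1) → ℝ) (j : Fin (n - 1)) :
    (Atil n *ᵥ e) j
      = polyIntegral (-1) 1 (derivative (interiorBasis n j) * derivative (interiorPoly n e)) := by
  simpa [Matrix.mulVec, dotProduct, Atil, stiffMatrix_eq_polyIntegral, interiorBasis]
    using (polyIntegral_interiorBasis_mul_interiorPoly derivative e j).symm

lemma dotProduct_polyIntegral_mul (f : ℝ[X] →ₗ[ℝ] ℝ[X]) (e : Fin (n - 1) → ℝ) (q : ℝ[X]) :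
    e ⬝ᵥ (fun j => polyIntegral (-1) 1 (f (interiorBasis n j) * q))
      = polyIntegral (-1) 1 (f (interiorPoly n e) * q) := by
  simp [dotProduct, coe_interiorPoly, Finset.sum_mul]

lemma dotProduct_Ctil_mulVec (e : Fin (n - 1) → ℝ) :
    e ⬝ᵥ (Ctil n *ᵥ e) = polyIntegral (-1) 1 (interiorPoly n e * interiorPoly n e) := by
  rw [show Ctil n *ᵥ e = _ from funext (Ctil_mulVec_apply e)]
  exact dotProduct_polyIntegral_mul LinearMap.id e _

lemma dotProduct_Atil_mulVec (e : Fin (n - 1) → ℝ) :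
    e ⬝ᵥ (Atil n *ᵥ e) = polyIntegral (-1) 1
      (derivative (interiorPoly n e : ℝ[X]) * derivative (interiorPoly n e : ℝ[X])) := by
  rw [show Atil n *ᵥ e = _ from funext (Atil_mulVec_apply e)]
  exact dotProduct_polyIntegral_mul derivative e _

lemma posDef_Ctil : (Ctil n).PosDef := by
  refine posDef_iff_dotProduct_mulVec.mpr ⟨IsHermitian.ext fun i j => ?_, fun e he => ?_⟩
  · simp [Ctil, massMatrix, mul_comm]
  · rw [star_trivial, dotProduct_Ctil_mulVec]
    refine polyIntegral_mul_self_pos (by norm_num) ?_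
    simpa using interiorPoly_injective.ne he

lemma posDef_Atil : (Atil n).PosDef := by
  refine posDef_iff_dotProduct_mulVec.mpr ⟨IsHermitian.ext fun i j => ?_, fun e he => ?_⟩
  · simp [Atil, stiffMatrix, mul_comm]
  · rw [star_trivial, dotProduct_Atil_mulVec]
    refine polyIntegral_mul_self_pos (by norm_num) fun hu' => ?_
    have hu : (interiorPoly n e : ℝ[X]) ≠ 0 := by simpa using interiorPoly_injective.ne he
    have hC := eq_C_of_derivative_eq_zero hu'
    have hu₀ := interiorPoly_eval_neg_one (n := n) e
    rw [hC, eval_C] at hu₀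
    exact hu (by rw [hC, hu₀, C_0])

lemma interiorMoments_apply (w : degreeLT ℝ (n + 1)) (j : Fin (n - 1)) :
    interiorMoments n w j = polyIntegral (-1) 1 (interiorBasis n j * w) := rfl

lemma coe_helmholtz (lam : ℝ) (p : degreeLT ℝ (n + 1)) :
    (helmholtz n lam p : ℝ[X]) = derivative (derivative (p : ℝ[X])) + lam • (p : ℝ[X]) := rfl

lemma interiorMoments_interiorPoly (e : Fin (n - 1) → ℝ) :
    interiorMoments n (interiorPoly n e) = Ctil n *ᵥ e :=
  funext fun j => (Ctil_mulVec_apply e j).symm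

lemma finrank_ker_interiorMoments_le_two : finrank ℝ (ker (interiorMoments n)) ≤ 2 := by
  have hsurj : Function.Surjective (interiorMoments n) := fun c => by
    obtain ⟨e, rfl⟩ := mulVec_surjective_iff_isUnit.mpr posDef_Ctil.isUnit c
    exact ⟨interiorPoly n e, interiorMoments_interiorPoly e⟩
  have := (interiorMoments n).finrank_range_add_finrank_ker
  rw [range_eq_top.mpr hsurj, finrank_top, (degreeLTEquiv ℝ (n + 1)).finrank_eq] at this
  simp only [finrank_fin_fun] at this
  omega

lemma interiorMoments_helmholtz_interiorPoly (lam : ℝ) (e : Fin (n - 1) → ℝ) :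
    interiorMoments n (helmholtz n lam (interiorPoly n e)) = lam • Ctil n *ᵥ e - Atil n *ᵥ e := by
  funext j
  rw [interiorMoments_apply, coe_helmholtz, mul_add, map_add, mul_smul_comm, map_smul,
    polyIntegral_mul_derivative (interiorBasis_eval_neg_one j) (interiorBasis_eval_one j),
    Pi.sub_apply, Pi.smul_apply, Ctil_mulVec_apply, Atil_mulVec_apply, smul_eq_mul]
  ring

lemma ker_helmholtz_comp_interiorPoly (lam : ℝ) : ker (helmholtz n lam ∘ₗ interiorPoly n) = ⊥ := by
  refine ker_eq_bot'.mpr fun e he => interiorPoly_injective ?_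
  rw [map_zero]
  exact Subtype.ext <| eq_zero_of_derivative_derivative_add_smul_eq_zero
    (by norm_num : (-1 : ℝ) ≠ 1) (congrArg Subtype.val he) (interiorPoly_eval_neg_one e)
    (interiorPoly_eval_one e)

end Interior

theorem interior_eigenvalues_pos_mult_le_two_general (n : ℕ) :
    (∀ (lam : ℝ) (e : Fin (n - 1) → ℝ), e ≠ 0 →
        (Atil n).mulVec e = lam • (Ctil n).mulVec e → 0 < lam) ∧
    (∀ lam : ℝ,
        Module.finrank ℝ (LinearMap.ker (Atil n - lam • Ctil n).mulVecLin) ≤ 2) := by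
  refine ⟨fun lam e he h => pos_of_mulVec_eq_smul_mulVec posDef_Atil posDef_Ctil he h,
    fun lam => ?_⟩
  have hmaps : ∀ e ∈ ker (Atil n - lam • Ctil n).mulVecLin,
      (helmholtz n lam ∘ₗ interiorPoly n) e ∈ ker (interiorMoments n) := by
    intro e he
    rw [mem_ker, mulVecLin_apply, sub_mulVec, smul_mulVec, sub_eq_zero] at he
    rw [mem_ker, LinearMap.comp_apply, interiorMoments_helmholtz_interiorPoly, he, sub_self]
  calc finrank ℝ (ker (Atil n - lam • Ctil n).mulVecLin)
      ≤ finrank ℝ (ker (interiorMoments n)) :=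
        finrank_le_finrank_of_injective <| (injective_restrict_iff hmaps).mpr <| by
          simp [ker_helmholtz_comp_interiorPoly]
    _ ≤ 2 := finrank_ker_interiorMoments_le_two

/-- Every generalized eigenvalue of `Ãe = λC̃e` is positive, and each generalized
eigenvalue has geometric multiplicity at most two. -/
theorem interior_eigenvalues_pos_mult_le_two (n : ℕ) (hn : 2 ≤ n) :
    (∀ (lam : ℝ) (e : Fin (n - 1) → ℝ), e ≠ 0 →
        (Atil n).mulVec e = lam • (Ctil n).mulVec e → 0 < lam) ∧
    (∀ lam : ℝ,
        Module.finrank ℝ (LinearMap.ker (Atil n - lam • Ctil n).mulVecLin) ≤ 2) :=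
  interior_eigenvalues_pos_mult_le_two_general n
end

section
/- For each l = 1,…,n-1, the vector s_0^{(l)} ∈ S_K^{(n)} defined by s_{0,j}^{(l)} = 0 at the nodes j = 1,…,K-1 and s_{0,j-1/2}^{(l)} = (-P)^{j-1} e^{(l)} on the elements j = 1,…,K is an eigenvector of the global problem 𝒜v = λ𝒞v with eigenvalue λ_0^{(l)}, where (λ_0^{(l)}, e^{(l)}) is a generalized eigenpair of Ãe = λC̃e with e^{(l)} even or odd. -/
open Matrix

/-- The flip (reversal) operator `P`: `(Pp)_l = p_{n-l}`. -/
def flipVec {m : ℕ} (v : Fin m → ℝ) : Fin m → ℝ := fun i => v i.rev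

lemma flip_dot {m : ℕ} (a b : Fin m → ℝ) : flipVec a ⬝ᵥ b = a ⬝ᵥ flipVec b := by
  simp only [dotProduct, flipVec]
  exact Fintype.sum_bijective Fin.rev Fin.rev_bijective _ _
    (fun i => by rw [Fin.rev_rev])


lemma flipVec_neg {m : ℕ} (v : Fin m → ℝ) : flipVec (-v) = -(flipVec v) := by
  funext i; simp [flipVec]

lemma iterate_pm {m : ℕ} (e : Fin m → ℝ) (hpar : flipVec e = e ∨ flipVec e = -e) (k : ℕ) :
    (fun w => -(flipVec w))^[k] e = e ∨ (fun w => -(flipVec w))^[k] e = -e := by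
  induction k with
  | zero => left; rfl
  | succ k ih =>
      rw [Function.iterate_succ_apply']
      rcases ih with h | h <;> rw [h] <;> rcases hpar with hp | hp
      · right; rw [hp]
      · left; rw [hp, neg_neg]
      · left; rw [flipVec_neg, hp, neg_neg]
      · right; rw [flipVec_neg, hp, neg_neg]

/-- The element-supported vector `s₀^{(l)}` — zero at all nodes and equal to
`(-P)^{j-1} e^{(l)}` on element `j` — satisfies the global FEM eigenvalue equations
with eigenvalue `λ₀^{(l)}`, where `(λ₀^{(l)}, e^{(l)})` is a generalized eigenpair of
`Ãe = λC̃e` with `e^{(l)}` even or odd.  The global equations are written with the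
blocks of the pencil `G(λ) = A - λC`: corner entries `g₀, gₙ`, edge vector `g`,
`ǧ = Pg`, and interior block `G̃`. -/
theorem element_supported_eigenvector (n K : ℕ) (hn : 2 ≤ n) (hK : 2 ≤ K)
    (A C : Matrix (Fin (n + 1)) (Fin (n + 1)) ℝ)
    (lam0 : ℝ) (e : Fin (n - 1) → ℝ) (he : e ≠ 0)
    (heig : (A.submatrix (interiorEmb n) (interiorEmb n)).mulVec e
      = lam0 • (C.submatrix (interiorEmb n) (interiorEmb n)).mulVec e)
    (hpar : flipVec e = e ∨ flipVec e = -e) :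
    let G : Matrix (Fin (n + 1)) (Fin (n + 1)) ℝ := A - lam0 • C
    let g0 : ℝ := G 0 0
    let gn : ℝ := G 0 (Fin.last n)
    let g : Fin (n - 1) → ℝ := fun i => G (interiorEmb n i) 0
    let gc : Fin (n - 1) → ℝ := flipVec g
    let Gt : Matrix (Fin (n - 1)) (Fin (n - 1)) ℝ := G.submatrix (interiorEmb n) (interiorEmb n)
    -- nodal values are zero, element values are `(-P)^{j-1} e`
    let vnode : ℕ → ℝ := fun _ => 0
    let velt : ℕ → Fin (n - 1) → ℝ := fun j => (fun w => -(flipVec w))^[j - 1] e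
    (∀ j : ℕ, 1 ≤ j → j ≤ K - 1 →
      gn * vnode (j - 1) + gc ⬝ᵥ velt j + 2 * g0 * vnode j
        + g ⬝ᵥ velt (j + 1) + gn * vnode (j + 1) = 0) ∧
    (∀ j : ℕ, 1 ≤ j → j ≤ K →
      (fun i => g i * vnode (j - 1)) + Gt.mulVec (velt j) + (fun i => gc i * vnode j) = 0) := by
  intro G g0 gn g gc Gt vnode velt
  -- each velt j is ±e
  have hvelt : ∀ j : ℕ, velt j = e ∨ velt j = -e := fun j => iterate_pm e hpar (j - 1)
  have hGe : Gt.mulVec e = 0 := by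
    have : Gt = A.submatrix (interiorEmb n) (interiorEmb n)
        - lam0 • C.submatrix (interiorEmb n) (interiorEmb n) := by
      ext i k
      simp [Gt, G, Matrix.sub_apply, Matrix.smul_apply]
    rw [this, Matrix.sub_mulVec, Matrix.smul_mulVec, heig, sub_self]
  constructor
  · intro j hj _
    have hj1 : velt (j + 1) = -(flipVec (velt j)) := by
      show (fun w => -(flipVec w))^[j + 1 - 1] e = _
      have : j + 1 - 1 = (j - 1) + 1 := by omega
      rw [this, Function.iterate_succ_apply']
    simp only [vnode, mul_zero, add_zero, zero_add]
    rw [hj1, dotProduct_neg, ← flip_dot]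
    show gc ⬝ᵥ velt j + -(gc ⬝ᵥ velt j) = 0
    ring
  · intro j _ _
    have hG : Gt.mulVec (velt j) = 0 := by
      rcases hvelt j with h | h <;> rw [h]
      · exact hGe
      · rw [Matrix.mulVec_neg, hGe, neg_zero]
    funext i
    simp [vnode, hG]
end

section
/- Fix k ∈ {1,…,K-1} and let λ ∉ spec(Ã,C̃) solve γ̂(λ) = cos(πk/K), where γ̂(λ) = -(g_0 - g·G̃^{-1}g)(λ)/(g_n - ǧ·G̃^{-1}g)(λ). Let p ∈ ℝ^{n-1} solve G̃(λ)p = -g(λ). Then the vector s ∈ S_K^{(n)} with s_j = sin(πkj/K) (j = 1,…,K-1) and s_{j-1/2} = p sin(πk(j-1)/K) + p̌ sin(πkj/K) (j = 1,…,K) satisfies the global FEM eigenvalue equations with eigenvalue λ. -/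
open Matrix Real

lemma flipVec_flipVec {m : ℕ} (v : Fin m → ℝ) : flipVec (flipVec v) = v := by
  funext i; simp [flipVec]

lemma dot_flip {m : ℕ} (u v : Fin m → ℝ) : u ⬝ᵥ flipVec v = flipVec u ⬝ᵥ v := by
  simp only [dotProduct, flipVec]
  exact Fintype.sum_equiv (Fin.revPerm) _ _ (fun i => by simp)

lemma flip_dot_flip {m : ℕ} (u v : Fin m → ℝ) : flipVec u ⬝ᵥ flipVec v = u ⬝ᵥ v := by
  rw [dot_flip, flipVec_flipVec]

/-- Fix `k ∈ {1,…,K-1}` and let `λ` (not an interior eigenvalue, so that `G̃(λ)` is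
invertible) solve `γ̂(λ) = cos(πk/K)` where
`γ̂(λ) = -(g₀ - g·G̃⁻¹g)/(gₙ - ǧ·G̃⁻¹g)`.  Let `p` solve `G̃(λ)p = -g(λ)`.  Then the
vector with nodal values `sin(πkj/K)` and element values
`p sin(πk(j-1)/K) + p̌ sin(πkj/K)` satisfies the global FEM eigenvalue equations
(written with the blocks of `G(λ) = A - λC`, `ǧ = Pg`, using `G̃P = PG̃`). -/
theorem sine_eigenvector (n K k : ℕ) (hn : 2 ≤ n) (hK : 2 ≤ K)
    (hk1 : 1 ≤ k) (hk2 : k ≤ K - 1)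
    (A C : Matrix (Fin (n + 1)) (Fin (n + 1)) ℝ) (lam : ℝ) :
    let G : Matrix (Fin (n + 1)) (Fin (n + 1)) ℝ := A - lam • C
    let g0 : ℝ := G 0 0
    let gn : ℝ := G 0 (Fin.last n)
    let g : Fin (n - 1) → ℝ := fun i => G (interiorEmb n i) 0
    let gc : Fin (n - 1) → ℝ := flipVec g
    let Gt : Matrix (Fin (n - 1)) (Fin (n - 1)) ℝ := G.submatrix (interiorEmb n) (interiorEmb n)
    ∀ (hGt : IsUnit Gt.det)
      (hsym : ∀ w, Gt.mulVec (flipVec w) = flipVec (Gt.mulVec w))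
      (hden : gn - gc ⬝ᵥ Gt⁻¹.mulVec g ≠ 0)
      (htheta : -(g0 - g ⬝ᵥ Gt⁻¹.mulVec g) / (gn - gc ⬝ᵥ Gt⁻¹.mulVec g)
        = Real.cos (π * k / K))
      (p : Fin (n - 1) → ℝ) (hp : Gt.mulVec p = -g),
    let vnode : ℕ → ℝ := fun j => Real.sin (π * k * j / K)
    let velt : ℕ → Fin (n - 1) → ℝ := fun j i =>
      p i * Real.sin (π * k * (j - 1 : ℕ) / K) + flipVec p i * Real.sin (π * k * j / K)
    (∀ j : ℕ, 1 ≤ j → j ≤ K - 1 →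
      gn * vnode (j - 1) + gc ⬝ᵥ velt j + 2 * g0 * vnode j
        + g ⬝ᵥ velt (j + 1) + gn * vnode (j + 1) = 0) ∧
    (∀ j : ℕ, 1 ≤ j → j ≤ K →
      (fun i => g i * vnode (j - 1)) + Gt.mulVec (velt j) + (fun i => gc i * vnode j) = 0) := by
  intro G g0 gn g gc Gt hGt hsym hden htheta p hp vnode velt
  have hgc : gc = flipVec g := rfl
  -- G̃⁻¹ g = -p
  have hpinv : Gt⁻¹.mulVec g = -p := by
    have h := congrArg (Gt⁻¹.mulVec ·) hp
    simp only [Matrix.mulVec_mulVec, Matrix.nonsing_inv_mul Gt hGt, Matrix.one_mulVec,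
      Matrix.mulVec_neg] at h
    rw [h, neg_neg]
  rw [hpinv] at hden htheta
  simp only [dotProduct_neg, sub_neg_eq_add] at hden htheta
  -- key scalar identity
  have hkey : g0 + g ⬝ᵥ p = -((gn + gc ⬝ᵥ p) * Real.cos (π * k / K)) := by
    field_simp at htheta
    linarith [htheta]
  -- G̃ applied to flipped p
  have hpflip : Gt.mulVec (flipVec p) = -gc := by
    rw [hsym, hp, hgc]; funext i; simp [flipVec]
  -- decomposition of velt
  have hvelt : ∀ j : ℕ, velt j
      = Real.sin (π * k * (j - 1 : ℕ) / K) • p + Real.sin (π * k * j / K) • flipVec p := by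
    intro j; funext i; simp [velt, mul_comm]
  have hGtvelt : ∀ j : ℕ, Gt.mulVec (velt j)
      = -(Real.sin (π * k * (j - 1 : ℕ) / K) • g) - Real.sin (π * k * j / K) • gc := by
    intro j
    rw [hvelt j, Matrix.mulVec_add, Matrix.mulVec_smul, Matrix.mulVec_smul, hp, hpflip]
    module
  -- sine identity
  have hsin : ∀ j : ℕ, 1 ≤ j →
      Real.sin (π * k * (j - 1 : ℕ) / K) + Real.sin (π * k * (j + 1 : ℕ) / K)
        = 2 * Real.cos (π * k / K) * Real.sin (π * k * j / K) := by
    intro j hj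
    have hc : ((j - 1 : ℕ) : ℝ) = (j : ℝ) - 1 := by
      have := Nat.cast_sub hj (R := ℝ); simpa using this
    have h1 : π * k * ((j - 1 : ℕ) : ℝ) / K = π * k * j / K - π * k / K := by
      rw [hc]; ring
    have h2 : π * k * ((j + 1 : ℕ) : ℝ) / K = π * k * j / K + π * k / K := by
      push_cast; ring
    rw [h1, h2, Real.sin_sub, Real.sin_add]; ring
  constructor
  · intro j hj1 hj2
    have hdot : ∀ (u : Fin (n-1) → ℝ) (j' : ℕ), u ⬝ᵥ velt j'
        = (u ⬝ᵥ p) * Real.sin (π * k * (j' - 1 : ℕ) / K)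
          + (u ⬝ᵥ flipVec p) * Real.sin (π * k * j' / K) := by
      intro u j'
      rw [hvelt j', dotProduct_add, dotProduct_smul, dotProduct_smul]
      simp [mul_comm]
    have e1 := hdot gc j
    have e2 := hdot g (j + 1)
    have hj' : (j + 1 - 1 : ℕ) = j := by omega
    rw [hj'] at e2
    have hfg : g ⬝ᵥ flipVec p = gc ⬝ᵥ p := by rw [dot_flip, hgc]
    have hgf : gc ⬝ᵥ flipVec p = g ⬝ᵥ p := by rw [hgc, dot_flip, flipVec_flipVec]
    rw [hfg] at e2
    rw [hgf] at e1
    have hs := hsin j hj1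
    show gn * Real.sin (π * k * ((j - 1 : ℕ) : ℝ) / K) + gc ⬝ᵥ velt j
        + 2 * g0 * Real.sin (π * k * j / K) + g ⬝ᵥ velt (j + 1)
        + gn * Real.sin (π * k * ((j + 1 : ℕ) : ℝ) / K) = 0
    rw [e1, e2]
    push_cast at hs ⊢
    linear_combination (gn + gc ⬝ᵥ p) * hs + 2 * Real.sin (π * k * j / K) * hkey
  · intro j hj1 hj2
    funext i
    have h := congrFun (hGtvelt j) i
    show g i * vnode (j - 1) + Gt.mulVec (velt j) i + gc i * vnode j = 0
    rw [h]
    show g i * Real.sin (π * k * ((j - 1 : ℕ) : ℝ) / K)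
        + ((-(Real.sin (π * k * (j - 1 : ℕ) / K) • g) - Real.sin (π * k * j / K) • gc) i)
        + gc i * Real.sin (π * k * ((j : ℕ) : ℝ) / K) = 0
    simp [Pi.smul_apply]
    ring
end
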